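/- Let q > 5 and γ > 0, and let f : ℝ³ → [0,∞) be measurable with ‖f‖_q := sup_{v∈ℝ³} (1+|v|)^q f(v) < ∞, ρ_f > 0, and T_f > 0. Then there exists a constant C_{q,γ} > 0, depending only on q and γ, such that for every v ∈ ℝ³, |v - U_f|^q M_γ(f)(v) ≤ C_{q,γ} ‖f‖_q, where M_γ(f)(v) := ρ_f (2πT_f)^{-3/2} exp(-γ|v-U_f|²/(2T_f)). -/

import Mathlib

/-! The Gaussian factor obeys `x ^ q * exp (-γ x² / 2T) ≤ c T ^ (q / 2)`, so the left-hand side is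
at most `c ρ T ^ ((q - 3) / 2)` and everything reduces to bounding `ρ T ^ ((q - 3) / 2)` by `N`.
The variance is at most the second moment about the origin; splitting that moment at radius `R`
and using `f ≤ N (1 + |v|) ^ (-q)` outside the ball gives `3 ρ T ≤ R² ρ + c N R ^ (5 - q)` for
every `R > 0`. Choosing `R ^ (q - 3) = c N / ρ` balances the two terms and gives
`ρ T ^ ((q - 3) / 2) ≤ c' N`. -/

open MeasureTheory Real

abbrev E3 := EuclideanSpace ℝ (Fin 3)

lemma rpow_mul_exp_neg_le {s t : ℝ} (hs : 0 < s) (ht : 0 ≤ t) :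
    t ^ s * exp (-t) ≤ s ^ s * exp (-s) := by
  have hts : t ≤ s * exp (t / s - 1) := by
    have := add_one_le_exp (t / s - 1)
    rw [sub_add_cancel, div_le_iff₀ hs] at this
    linarith
  calc t ^ s * exp (-t) ≤ (s * exp (t / s - 1)) ^ s * exp (-t) := by gcongr
    _ = s ^ s * exp (-s) := by
      rw [mul_rpow hs.le (exp_pos _).le, ← exp_mul, mul_assoc, ← exp_add]
      congr 2
      field_simp
      ring

lemma rpow_mul_exp_neg_sq_le {q γ T x : ℝ} (hq : 0 < q) (hγ : 0 < γ) (hT : 0 < T)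
    (hx : 0 ≤ x) :
    x ^ q * exp (-γ * x ^ 2 / (2 * T)) ≤ (q / γ) ^ (q / 2) * exp (-(q / 2)) * T ^ (q / 2) := by
  set t := γ * x ^ 2 / (2 * T)
  have hx_q : x ^ q = (2 * T / γ) ^ (q / 2) * t ^ (q / 2) := by
    have hx_sq : x ^ 2 = 2 * T / γ * t := by simp only [t]; field_simp
    rw [← mul_rpow (by positivity) (by positivity), ← hx_sq, ← rpow_natCast, ← rpow_mul hx]
    ring_nf
  calc x ^ q * exp (-γ * x ^ 2 / (2 * T))
      = (2 * T / γ) ^ (q / 2) * (t ^ (q / 2) * exp (-t)) := by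
        rw [hx_q, neg_mul, neg_div]; ring
    _ ≤ (2 * T / γ) ^ (q / 2) * ((q / 2) ^ (q / 2) * exp (-(q / 2))) := by
        gcongr _ * ?_
        exact rpow_mul_exp_neg_le (by positivity) (by positivity)
    _ = (q / γ) ^ (q / 2) * exp (-(q / 2)) * T ^ (q / 2) := by
        rw [← mul_assoc, ← mul_rpow (by positivity) (by positivity), mul_right_comm,
          ← mul_rpow (by positivity) hT.le]
        ring_nf

lemma rpow_mul_maxwellian_le (d : ℝ) {q γ ρ T x : ℝ} (hq : 0 < q) (hγ : 0 < γ) (hρ : 0 ≤ ρ)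
    (hT : 0 < T) (hx : 0 ≤ x) :
    x ^ q * (ρ * (2 * π * T) ^ (-d / 2) * exp (-γ * x ^ 2 / (2 * T))) ≤
      (2 * π) ^ (-d / 2) * (q / γ) ^ (q / 2) * exp (-(q / 2)) * (ρ * T ^ ((q - d) / 2)) := by
  have hT_pow : T ^ (-d / 2) * T ^ (q / 2) = T ^ ((q - d) / 2) := by
    rw [← rpow_add hT]; ring_nf
  calc x ^ q * (ρ * (2 * π * T) ^ (-d / 2) * exp (-γ * x ^ 2 / (2 * T)))
      = ρ * (2 * π) ^ (-d / 2) * T ^ (-d / 2) * (x ^ q * exp (-γ * x ^ 2 / (2 * T))) := by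
        rw [mul_rpow (by positivity) hT.le]; ring
    _ ≤ ρ * (2 * π) ^ (-d / 2) * T ^ (-d / 2) *
          ((q / γ) ^ (q / 2) * exp (-(q / 2)) * T ^ (q / 2)) := by
        gcongr _ * ?_
        exact rpow_mul_exp_neg_sq_le hq hγ hT hx
    _ = _ := by rw [← hT_pow]; ring

lemma rpow_le_of_forall_le_sq_add {p a T : ℝ} (hp : 0 < p) (ha : 0 < a) (hT : 0 ≤ T)
    (h : ∀ R, 0 < R → T ≤ R ^ 2 + a * R ^ (2 - p)) : T ^ (p / 2) ≤ 2 ^ (p / 2) * a := by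
  -- `R = a ^ (1 / p)` balances the two terms
  have hT_le : T ≤ 2 * a ^ (2 / p) := by
    convert h (a ^ p⁻¹) (by positivity) using 1
    rw [← rpow_natCast, ← rpow_mul ha.le, ← rpow_mul ha.le]
    nth_rw 3 [← rpow_one a]
    rw [← rpow_add ha]
    field_simp
    ring_nf
  calc T ^ (p / 2) ≤ (2 * a ^ (2 / p)) ^ (p / 2) := by gcongr
    _ = 2 ^ (p / 2) * a := by
      rw [mul_rpow (by norm_num) (by positivity), ← rpow_mul ha.le]
      field_simp
      rw [rpow_one]

section Variance

variable {E : Type*} [NormedAddCommGroup E] [InnerProductSpace ℝ E] [CompleteSpace E]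
  [MeasurableSpace E] {μ : Measure E} {f : E → ℝ}

lemma integral_norm_sub_sq_mul (hf : Integrable f μ) (hfv : Integrable (fun w ↦ f w • w) μ)
    (hf₂ : Integrable (fun w ↦ ‖w‖ ^ 2 * f w) μ) (c : E) :
    ∫ w, ‖w - c‖ ^ 2 * f w ∂μ =
      ∫ w, ‖w‖ ^ 2 * f w ∂μ - 2 * inner ℝ c (∫ w, f w • w ∂μ) + ‖c‖ ^ 2 * ∫ w, f w ∂μ := by
  have hexpand : ∀ w, ‖w - c‖ ^ 2 * f w =
      ‖w‖ ^ 2 * f w - 2 * inner ℝ c (f w • w) + ‖c‖ ^ 2 * f w := by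
    intro w
    rw [norm_sub_sq_real, inner_smul_right, real_inner_comm]
    ring
  have hcross : Integrable (fun w ↦ 2 * inner ℝ c (f w • w)) μ := (hfv.const_inner c).const_mul 2
  have hdiff : Integrable (fun w ↦ ‖w‖ ^ 2 * f w - 2 * inner ℝ c (f w • w)) μ := hf₂.sub hcross
  simp_rw [hexpand]
  rw [integral_add hdiff (hf.const_mul _), integral_sub hf₂ hcross, integral_const_mul,
    integral_const_mul, integral_inner hfv]

lemma integral_norm_sub_mean_sq_le (hf : Integrable f μ) (hfv : Integrable (fun w ↦ f w • w) μ)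
    (hf₂ : Integrable (fun w ↦ ‖w‖ ^ 2 * f w) μ) {c : E} (hρ : 0 ≤ ∫ w, f w ∂μ)
    (hc : ∫ w, f w • w ∂μ = (∫ w, f w ∂μ) • c) :
    ∫ w, ‖w - c‖ ^ 2 * f w ∂μ ≤ ∫ w, ‖w‖ ^ 2 * f w ∂μ := by
  rw [integral_norm_sub_sq_mul hf hfv hf₂, hc, inner_smul_right, real_inner_self_eq_norm_sq]
  nlinarith [mul_nonneg hρ (sq_nonneg ‖c‖)]

end Variance

lemma sq_mul_le_sq_mul_add_rpow {q N R x y : ℝ} (hq : 0 ≤ q) (hR : 0 < R) (hx : 0 ≤ x)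
    (hy : 0 ≤ y) (hN : (1 + x) ^ q * y ≤ N) :
    x ^ 2 * y ≤ R ^ 2 * y + 2 ^ q * N * (R + x) ^ (-(q - 2)) := by
  have htail : 0 ≤ 2 ^ q * N * (R + x) ^ (-(q - 2)) := by
    have hN₀ : 0 ≤ N := le_trans (by positivity) hN
    positivity
  rcases le_or_gt x R with hxR | hRx
  · have : x ^ 2 * y ≤ R ^ 2 * y := by gcongr
    linarith
  have hRx₀ : 0 < R + x := by positivity
  have hy_le : y ≤ 2 ^ q * N * (R + x) ^ (-q) := by
    rw [rpow_neg hRx₀.le, ← div_eq_mul_inv, le_div_iff₀ (by positivity)]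
    calc y * (R + x) ^ q ≤ y * (2 * (1 + x)) ^ q := by gcongr; linarith
      _ = 2 ^ q * ((1 + x) ^ q * y) := by rw [mul_rpow (by norm_num) (by positivity)]; ring
      _ ≤ 2 ^ q * N := by gcongr
  calc x ^ 2 * y ≤ (R + x) ^ 2 * (2 ^ q * N * (R + x) ^ (-q)) := by
        gcongr
        linarith
    _ = 2 ^ q * N * (R + x) ^ (-(q - 2)) := by
        rw [neg_sub, sub_eq_add_neg, rpow_add hRx₀, rpow_two]
        ring
    _ ≤ R ^ 2 * y + 2 ^ q * N * (R + x) ^ (-(q - 2)) := le_add_of_nonneg_left (by positivity)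

section Decay

open Module

variable {E : Type*} [NormedAddCommGroup E] [NormedSpace ℝ E] [FiniteDimensional ℝ E]
  [MeasurableSpace E] [BorelSpace E] (μ : Measure E) [μ.IsAddHaarMeasure]

lemma integral_one_add_norm_rpow_neg_pos {r : ℝ} (hr : finrank ℝ E < r) :
    0 < ∫ w, (1 + ‖w‖) ^ (-r) ∂μ :=
  integral_pos_of_integrable_nonneg_nonzero (x := 0)
    ((continuous_const.add continuous_norm).rpow_const
      fun w ↦ Or.inl (by simp only [Pi.add_apply]; positivity))
    (integrable_one_add_norm hr) (fun w ↦ by positivity) (by simp)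

lemma integrable_add_norm_rpow_neg {R r : ℝ} (hR : 0 < R) (hr : finrank ℝ E < r) :
    Integrable (fun w ↦ (R + ‖w‖) ^ (-r)) μ := by
  refine (((integrable_one_add_norm hr).comp_smul (inv_ne_zero hR.ne')).const_mul
    (R ^ (-r))).congr (ae_of_all _ fun w ↦ ?_)
  simp only
  rw [← mul_rpow hR.le (by positivity), norm_smul, norm_inv, norm_of_nonneg hR.le, mul_add,
    mul_one, mul_inv_cancel_left₀ hR.ne']

lemma integral_add_norm_rpow_neg {R : ℝ} (r : ℝ) (hR : 0 < R) :
    ∫ w, (R + ‖w‖) ^ (-r) ∂μ = R ^ (finrank ℝ E - r) * ∫ w, (1 + ‖w‖) ^ (-r) ∂μ := by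
  have hscale : ∀ w : E, (R + ‖R • w‖) ^ (-r) = R ^ (-r) * (1 + ‖w‖) ^ (-r) := by
    intro w
    rw [norm_smul, norm_of_nonneg hR.le, ← mul_rpow hR.le (by positivity), mul_add, mul_one]
  have h := Measure.integral_comp_smul μ (fun w ↦ (R + ‖w‖) ^ (-r)) R
  simp only [hscale, integral_const_mul, smul_eq_mul, abs_inv, abs_pow, abs_of_pos hR] at h
  rw [rpow_sub hR, rpow_natCast, div_eq_mul_inv, ← rpow_neg hR.le, mul_assoc, h, ← mul_assoc,
    mul_inv_cancel₀ (by positivity), one_mul]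

lemma integrable_norm_sq_mul {q N : ℝ} {f : E → ℝ} (hq : finrank ℝ E + 2 < q)
    (hf₀ : ∀ w, 0 ≤ f w) (hf : Integrable f μ) (hN : ∀ w, (1 + ‖w‖) ^ q * f w ≤ N) :
    Integrable (fun w ↦ ‖w‖ ^ 2 * f w) μ := by
  refine Integrable.mono' (hf.add ((integrable_add_norm_rpow_neg μ one_pos
    (r := q - 2) (by linarith)).const_mul (2 ^ q * N)))
    ((continuous_norm.pow 2).aestronglyMeasurable.mul hf.1) (ae_of_all _ fun w ↦ ?_)
  rw [norm_of_nonneg (by have := hf₀ w; positivity)]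
  simpa using sq_mul_le_sq_mul_add_rpow (by linarith) one_pos (norm_nonneg w) (hf₀ w) (hN w)

lemma integral_norm_sq_mul_le {q N R : ℝ} {f : E → ℝ} (hq : finrank ℝ E + 2 < q) (hR : 0 < R)
    (hf₀ : ∀ w, 0 ≤ f w) (hf : Integrable f μ) (hN : ∀ w, (1 + ‖w‖) ^ q * f w ≤ N) :
    ∫ w, ‖w‖ ^ 2 * f w ∂μ ≤ R ^ 2 * ∫ w, f w ∂μ +
      2 ^ q * N * R ^ (finrank ℝ E + 2 - q) * ∫ w, (1 + ‖w‖) ^ (-(q - 2)) ∂μ := by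
  have hdecay := integrable_add_norm_rpow_neg μ hR (r := q - 2) (by linarith)
  calc ∫ w, ‖w‖ ^ 2 * f w ∂μ
      ≤ ∫ w, (R ^ 2 * f w + 2 ^ q * N * (R + ‖w‖) ^ (-(q - 2))) ∂μ :=
        integral_mono (integrable_norm_sq_mul μ hq hf₀ hf hN)
          ((hf.const_mul _).add (hdecay.const_mul _))
          fun w ↦ sq_mul_le_sq_mul_add_rpow (by linarith) hR (norm_nonneg w) (hf₀ w) (hN w)
    _ = _ := by
        rw [integral_add (hf.const_mul _) (hdecay.const_mul _), integral_const_mul,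
          integral_const_mul, integral_add_norm_rpow_neg μ _ hR]
        ring_nf

end Decay

lemma density_mul_temperature_rpow_le {q N ρ T : ℝ} {U : E3} {f : E3 → ℝ} (hq : 5 < q)
    (hf₀ : ∀ v, 0 ≤ f v) (hf : Integrable f) (hN : ∀ v, (1 + ‖v‖) ^ q * f v ≤ N)
    (hfv : Integrable fun v ↦ f v • v) (hρ : ρ = ∫ v, f v) (hU : U = ρ⁻¹ • ∫ v, f v • v)
    (hT : T = (3 * ρ)⁻¹ * ∫ v, ‖v - U‖ ^ 2 * f v) (hρ₀ : 0 < ρ) :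
    ρ * T ^ ((q - 3) / 2) ≤ 2 ^ ((q - 3) / 2) * 2 ^ q * (∫ v : E3, (1 + ‖v‖) ^ (-(q - 2))) * N := by
  have hd : (Module.finrank ℝ E3 : ℝ) = 3 := by simp
  set κ := ∫ v : E3, (1 + ‖v‖) ^ (-(q - 2))
  have hκ : 0 < κ := integral_one_add_norm_rpow_neg_pos volume (by rw [hd]; linarith)
  have hN₀ : 0 < N := by
    by_contra! hN₀
    have hf_zero : ∀ v, f v = 0 := fun v ↦
      le_antisymm (nonpos_of_mul_nonpos_right ((hN v).trans hN₀) (by positivity)) (hf₀ v)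
    simp only [hf_zero, integral_zero] at hρ
    linarith
  have hT₀ : 0 ≤ T := by
    rw [hT]
    exact mul_nonneg (by positivity) (integral_nonneg fun v ↦ by have := hf₀ v; positivity)
  have hvar : 3 * ρ * T ≤ ∫ v, ‖v‖ ^ 2 * f v := by
    rw [hT, ← mul_assoc, mul_inv_cancel₀ (by positivity), one_mul]
    refine integral_norm_sub_mean_sq_le hf hfv
      (integrable_norm_sq_mul volume (by rw [hd]; linarith) hf₀ hf hN) (hρ ▸ hρ₀.le) ?_
    rw [hU, ← hρ, smul_smul, mul_inv_cancel₀ hρ₀.ne', one_smul]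
  have hsplit : ∀ R, 0 < R → T ≤ R ^ 2 + 2 ^ q * κ * N / ρ * R ^ (2 - (q - 3)) := by
    intro R hR
    have hmoment := integral_norm_sq_mul_le volume (by rw [hd]; linarith) hR hf₀ hf hN
    rw [hd, ← hρ, show (3 : ℝ) + 2 - q = 2 - (q - 3) by ring] at hmoment
    refine le_of_mul_le_mul_left ?_ hρ₀
    calc ρ * T ≤ 3 * ρ * T := by nlinarith
      _ ≤ _ := hvar.trans hmoment
      _ = _ := by field_simp; ring
  calc ρ * T ^ ((q - 3) / 2) ≤ ρ * (2 ^ ((q - 3) / 2) * (2 ^ q * κ * N / ρ)) := by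
        gcongr
        exact rpow_le_of_forall_le_sq_add (by linarith) (by positivity) hT₀ hsplit
    _ = _ := by field_simp

/-- for q > 5 and γ > 0 there is a constant C_{q,γ}, depending only
on q and γ, such that |v - U_f|^q M_γ(f)(v) ≤ C_{q,γ} ‖f‖_q for every v. -/
theorem centered_weight_M_bdd (q γ : ℝ) (hq : 5 < q) (hγ : 0 < γ) :
    ∃ C : ℝ, 0 < C ∧
      ∀ (f : E3 → ℝ), Measurable f → (∀ v, 0 ≤ f v) →
        Integrable f →
        ∀ N : ℝ, (∀ v, (1 + ‖v‖) ^ q * f v ≤ N) →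
        ∀ (ρf : ℝ) (Uf : E3) (Tf : ℝ),
          ρf = ∫ v, f v →
          Integrable (fun v => f v • v) →
          Uf = ρf⁻¹ • ∫ v, f v • v →
          Integrable (fun v => ‖v - Uf‖ ^ 2 * f v) →
          Tf = (3 * ρf)⁻¹ * ∫ v, ‖v - Uf‖ ^ 2 * f v →
          0 < ρf → 0 < Tf →
          ∀ v : E3,
            ‖v - Uf‖ ^ q *
              (ρf * (2 * π * Tf) ^ (-(3 : ℝ) / 2) *
                Real.exp (-γ * ‖v - Uf‖ ^ 2 / (2 * Tf))) ≤ C * N := by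
  set κ := ∫ v : E3, (1 + ‖v‖) ^ (-(q - 2))
  have hκ : 0 < κ := integral_one_add_norm_rpow_neg_pos volume
    (by rw [finrank_euclideanSpace_fin, Nat.cast_ofNat]; linarith)
  refine ⟨(2 * π) ^ (-(3 : ℝ) / 2) * (q / γ) ^ (q / 2) * exp (-(q / 2)) *
    (2 ^ ((q - 3) / 2) * 2 ^ q * κ), by positivity, ?_⟩
  intro f _ hf₀ hf N hN ρ U T hρ hfv hU _ hT hρ₀ hT₀ v
  calc _ ≤ (2 * π) ^ (-(3 : ℝ) / 2) * (q / γ) ^ (q / 2) * exp (-(q / 2)) *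
        (ρ * T ^ ((q - 3) / 2)) :=
        rpow_mul_maxwellian_le 3 (by linarith) hγ hρ₀.le hT₀ (norm_nonneg _)
    _ ≤ (2 * π) ^ (-(3 : ℝ) / 2) * (q / γ) ^ (q / 2) * exp (-(q / 2)) *
        (2 ^ ((q - 3) / 2) * 2 ^ q * κ * N) := by
        gcongr _ * ?_
        exact density_mul_temperature_rpow_le hq hf₀ hf hN hfv hρ hU hT hρ₀
    _ = _ := by ring
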